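/- Let Z be a real m×n matrix with ZᵀZ = Iₙ and coherence μ_z = max_{1≤j≤m} ‖eⱼᵀZ‖₂² > 0. Let D = diag(d₁,…,d_m) be a non-negative m×m diagonal matrix with diagonal entries arranged in non-increasing order d_[1] ≥ … ≥ d_[m] ≥ 0. Set t = ⌊1/μ_z⌋ and assume t < m. Then ‖DZ‖₂² ≤ μ_z·Σ_{j=1}^{t} d_[j]² + (1 − t·μ_z)·d_[t+1]². -/

import Mathlib

/-!
Writing `y = Zx` for a unit vector `x`, orthonormality of the columns of `Z` gives `‖y‖₂ = 1`
and Cauchy–Schwarz gives `y_j² ≤ μ_z`, so `‖DZx‖₂² = ∑ d_j² y_j²` is a weighted sum of the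
`d_[j]²` with weights `w_j ∈ [0, μ_z]` summing to one. Such a sum is at most the greedy one,
which puts the full weight `μ_z` on the `t` largest entries and the remainder on the next one:
termwise `d_[j]² w_j ≤ d_[t+1]² w_j + μ_z (d_[j]² - d_[t+1]²)` for `j ≤ t` and
`d_[j]² w_j ≤ d_[t+1]² w_j` for `j > t`, and these sum to the bound.
-/

open Matrix Finset

/-- The spectral (operator two-) norm of a real `p × q` matrix:
`sup_{‖x‖₂=1} ‖A x‖₂`. -/
noncomputable def spectralNorm' {p q : ℕ} (A : Matrix (Fin p) (Fin q) ℝ) : ℝ :=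
  sSup {r | ∃ x : Fin q → ℝ, ∑ i, x i ^ 2 = 1 ∧ r = Real.sqrt (∑ j, A.mulVec x j ^ 2)}

/-- The weighted sum of `c` with weight `μ` on each index below `τ` and the rest of a unit
total on `τ`. -/
noncomputable def cappedGreedySum {ι : Type*} [Preorder ι] [LocallyFiniteOrderBot ι]
    (μ : ℝ) (c : ι → ℝ) (τ : ι) : ℝ :=
  μ * ∑ j ∈ Iio τ, c j + (1 - #(Iio τ) * μ) * c τ

section CappedWeights

variable {ι : Type*} [LinearOrder ι] [LocallyFiniteOrderBot ι] {μ : ℝ} {c : ι → ℝ}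

theorem le_cappedGreedySum (hμ : 0 ≤ μ) (hc : Antitone c) (τ : ι) :
    c τ ≤ cappedGreedySum μ c τ := by
  have h : #(Iio τ) • c τ ≤ ∑ j ∈ Iio τ, c j :=
    card_nsmul_le_sum _ _ _ fun j hj => hc (mem_Iio.1 hj).le
  rw [nsmul_eq_mul] at h
  have := mul_le_mul_of_nonneg_left h hμ
  unfold cappedGreedySum
  linarith

theorem sum_mul_le_cappedGreedySum [Fintype ι] (hc : Antitone c) {w : ι → ℝ}
    (hw0 : ∀ j, 0 ≤ w j) (hwμ : ∀ j, w j ≤ μ) (hw : ∑ j, w j = 1) (τ : ι) :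
    ∑ j, c j * w j ≤ cappedGreedySum μ c τ := by
  have below : ∑ j ∈ Iio τ, (c j - c τ) * w j ≤ ∑ j ∈ Iio τ, (c j - c τ) * μ :=
    sum_le_sum fun j hj =>
      mul_le_mul_of_nonneg_left (hwμ j) (sub_nonneg.2 (hc (mem_Iio.1 hj).le))
  have above : ∑ j ∈ (Iio τ)ᶜ, (c j - c τ) * w j ≤ 0 :=
    sum_nonpos fun j hj =>
      mul_nonpos_of_nonpos_of_nonneg
        (sub_nonpos.2 (hc (not_lt.1 (by simpa using hj)))) (hw0 j)
  have split : ∑ j, c j * w j - c τ =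
      ∑ j ∈ Iio τ, (c j - c τ) * w j + ∑ j ∈ (Iio τ)ᶜ, (c j - c τ) * w j := by
    rw [sum_add_sum_compl]
    simp only [sub_mul, sum_sub_distrib, ← mul_sum, hw, mul_one]
  have capped : ∑ j ∈ Iio τ, (c j - c τ) * μ = μ * ∑ j ∈ Iio τ, c j - #(Iio τ) * μ * c τ := by
    simp only [sub_mul, sum_sub_distrib, ← sum_mul, sum_const, nsmul_eq_mul]
    ring
  unfold cappedGreedySum
  linarith

end CappedWeights

theorem sum_ite_val_lt_eq_sum_Iio {m : ℕ} (f : Fin m → ℝ) (τ : Fin m) :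
    ∑ j : Fin m, (if (j : ℕ) < τ then f j else 0) = ∑ j ∈ Iio τ, f j := by
  rw [← sum_filter]
  congr 1
  ext j
  simp only [mem_filter, mem_univ, true_and, mem_Iio]
  exact Fin.lt_def.symm

section Matrices

variable {m n : ℕ}

theorem sum_sq_mulVec_eq_of_transpose_mul_self {Z : Matrix (Fin m) (Fin n) ℝ}
    (hZ : Zᵀ * Z = 1) (x : Fin n → ℝ) : ∑ j, (Z *ᵥ x) j ^ 2 = ∑ i, x i ^ 2 := by
  have h : (Z *ᵥ x) ⬝ᵥ (Z *ᵥ x) = x ⬝ᵥ x := by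
    rw [dotProduct_mulVec, ← vecMul_transpose, vecMul_vecMul, hZ, vecMul_one]
  simpa only [dotProduct, sq] using h

theorem sq_mulVec_apply_le (Z : Matrix (Fin m) (Fin n) ℝ) (x : Fin n → ℝ) (j : Fin m) :
    (Z *ᵥ x) j ^ 2 ≤ (∑ i, Z j i ^ 2) * ∑ i, x i ^ 2 := by
  simpa only [mulVec, dotProduct] using sum_mul_sq_le_sq_mul_sq univ (Z j) x

theorem sum_sq_diagonal_mul_mulVec (d : Fin m → ℝ) (Z : Matrix (Fin m) (Fin n) ℝ)
    (x : Fin n → ℝ) : ∑ j, ((diagonal d * Z) *ᵥ x) j ^ 2 = ∑ j, d j ^ 2 * (Z *ᵥ x) j ^ 2 := by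
  simp only [← mulVec_mulVec, mulVec_diagonal, mul_pow]

theorem spectralNorm'_sq_le {A : Matrix (Fin m) (Fin n) ℝ} {R : ℝ} (hR : 0 ≤ R)
    (h : ∀ x : Fin n → ℝ, ∑ i, x i ^ 2 = 1 → ∑ j, (A *ᵥ x) j ^ 2 ≤ R) :
    spectralNorm' A ^ 2 ≤ R := by
  have hle : spectralNorm' A ≤ √R :=
    Real.sSup_le (by rintro _ ⟨x, hx, rfl⟩; exact Real.sqrt_le_sqrt (h x hx)) (Real.sqrt_nonneg R)
  have hnonneg : 0 ≤ spectralNorm' A :=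
    Real.sSup_nonneg (by rintro _ ⟨x, -, rfl⟩; exact Real.sqrt_nonneg _)
  exact (Real.le_sqrt hnonneg hR).1 hle

end Matrices

theorem norm_diag_scaled_orthonormal_bound_general
    {m n : ℕ}
    (Z : Matrix (Fin m) (Fin n) ℝ) (hZ : Zᵀ * Z = 1)
    (μz : ℝ) (hμ : IsGreatest (Set.range fun j : Fin m => ∑ i, Z j i ^ 2) μz)
    (d : Fin m → ℝ) (hd : ∀ j, 0 ≤ d j)
    (ds : Fin m → ℝ) (hds : Antitone ds)
    (hperm : ∃ σ : Equiv.Perm (Fin m), ds = d ∘ σ)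
    (t : ℕ) (htm : t < m) :
    spectralNorm' (Matrix.diagonal d * Z) ^ 2 ≤
      μz * (∑ j : Fin m, if (j : ℕ) < t then ds j ^ 2 else 0) +
        (1 - t * μz) * ds ⟨t, htm⟩ ^ 2 := by
  obtain ⟨σ, rfl⟩ := hperm
  let τ : Fin m := ⟨t, htm⟩
  have hc : Antitone fun j => d (σ j) ^ 2 := fun i j hij =>
    pow_le_pow_left₀ (hd _) (hds hij) 2
  have hμ_nonneg : 0 ≤ μz := by
    obtain ⟨j, rfl⟩ := hμ.1
    positivity
  have hrhs : cappedGreedySum μz (fun j => d (σ j) ^ 2) τ =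
      μz * (∑ j : Fin m, if (j : ℕ) < t then (d ∘ σ) j ^ 2 else 0) +
        (1 - t * μz) * (d ∘ σ) τ ^ 2 := by
    rw [cappedGreedySum, Fin.card_Iio, sum_ite_val_lt_eq_sum_Iio _ τ]
    rfl
  rw [← hrhs]
  refine spectralNorm'_sq_le ((sq_nonneg _).trans (le_cappedGreedySum hμ_nonneg hc τ)) ?_
  intro x hx
  rw [sum_sq_diagonal_mul_mulVec, ← Equiv.sum_comp σ]
  refine sum_mul_le_cappedGreedySum hc (fun _ => sq_nonneg _) (fun j => ?_) ?_ τ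
  · calc (Z *ᵥ x) (σ j) ^ 2 ≤ (∑ i, Z (σ j) i ^ 2) * ∑ i, x i ^ 2 :=
          sq_mulVec_apply_le Z x (σ j)
      _ ≤ μz := by rw [hx, mul_one]; exact hμ.2 ⟨σ j, rfl⟩
  · rw [Equiv.sum_comp σ fun j => (Z *ᵥ x) j ^ 2, sum_sq_mulVec_eq_of_transpose_mul_self hZ, hx]

/-- Two-norm bound for the diagonal scaling of a matrix with orthonormal columns.  If
`ZᵀZ = Iₙ` with coherence `μ_z > 0`, `D = diag(d₁,…,d_m)` is non-negative with entries
sorted non-increasingly `d_[1] ≥ … ≥ d_[m] ≥ 0`, and `t = ⌊1/μ_z⌋ < m`, then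
`‖DZ‖₂² ≤ μ_z·Σ_{j=1}^{t} d_[j]² + (1 − t·μ_z)·d_[t+1]²`. -/
theorem norm_diag_scaled_orthonormal_bound
    {m n : ℕ} (hn : 1 ≤ n)
    (Z : Matrix (Fin m) (Fin n) ℝ) (hZ : Zᵀ * Z = 1)
    (μz : ℝ) (hμ : IsGreatest (Set.range fun j : Fin m => ∑ i, Z j i ^ 2) μz)
    (hμ0 : 0 < μz)
    (d : Fin m → ℝ) (hd : ∀ j, 0 ≤ d j)
    (ds : Fin m → ℝ) (hds : Antitone ds)
    (hperm : ∃ σ : Equiv.Perm (Fin m), ds = d ∘ σ)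
    (t : ℕ) (ht : t = Nat.floor (1 / μz)) (htm : t < m) :
    spectralNorm' (Matrix.diagonal d * Z) ^ 2 ≤
      μz * (∑ j : Fin m, if (j : ℕ) < t then ds j ^ 2 else 0) +
        (1 - t * μz) * ds ⟨t, htm⟩ ^ 2 :=
  norm_diag_scaled_orthonormal_bound_general Z hZ μz hμ d hd ds hds hperm t htm
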